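/- arXiv:1404.1383 — 5 statements merged into one kernel-verified Lean document; each statement's English description precedes it below -/
import Mathlib

section
/- Let A be a C*-algebra (not necessarily unital), with the canonical order on self-adjoint elements (x ≤ y iff y − x is positive). If a and b are positive elements of A with ‖a‖ ≤ 1 and ‖b‖ < 1, then there exists an element c of A such that a ≤ c, b ≤ c, and ‖c‖ ≤ 1. -/
section Aux
variable {A : Type*} [NonUnitalCStarAlgebra A] [PartialOrder A] [StarOrderedRing A]

/-- `Unitization.fst` as a star algebra homomorphism. -/
def fstStarHom (A : Type*) [NonUnitalCStarAlgebra A] : Unitization ℂ A →⋆ₐ[ℂ] ℂ :=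
  { Unitization.fstHom ℂ A with map_star' := fun x => Unitization.fst_star x }

lemma continuous_fstStarHom (A : Type*) [NonUnitalCStarAlgebra A] :
    Continuous (fstStarHom A) :=
  continuous_fst.comp (continuous_induced_dom (α := Unitization ℂ A))

theorem aux_fst_nonneg (x : Unitization ℂ A) (hx : 0 ≤ x) : ∃ t : ℝ, 0 ≤ t ∧ x.fst = t := by
  have h1 : CFC.sqrt x * CFC.sqrt x = x := CFC.sqrt_mul_sqrt_self x hx
  have h2 : IsSelfAdjoint (CFC.sqrt x) := .of_nonneg (CFC.sqrt_nonneg (a := x))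
  set z := (CFC.sqrt x).fst with hz
  have hzr : (starRingEnd ℂ) z = z := by
    have := congrArg (fun x : Unitization ℂ A => x.fst) h2.star_eq
    simpa [Unitization.fst_star] using this
  have hxz : x.fst = z * z := by rw [← h1, Unitization.fst_mul]
  rw [Complex.conj_eq_iff_re] at hzr
  refine ⟨z.re ^ 2, sq_nonneg _, ?_⟩
  rw [hxz]
  nth_rw 1 [← hzr]; nth_rw 2 [← hzr]
  push_cast; ring

theorem aux_fst_one_of_sq (x : Unitization ℂ A) (hx : 0 ≤ x)
    (hsq : x.fst * x.fst = 1) : x.fst = 1 := by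
  obtain ⟨t, ht, hxt⟩ := aux_fst_nonneg x hx
  rw [hxt] at hsq ⊢
  norm_cast at hsq ⊢
  rcases mul_self_eq_one_iff.mp hsq with h | h
  · exact h
  · nlinarith

theorem main_aux (a b : A) (ha : 0 ≤ a) (hb : 0 ≤ b) (hna : ‖a‖ ≤ 1) (hnb : ‖b‖ < 1) :
    ∃ c : A, a ≤ c ∧ b ≤ c ∧ ‖c‖ ≤ 1 := by
  set a' : Unitization ℂ A := (a : Unitization ℂ A) with ha'def
  set b' : Unitization ℂ A := (b : Unitization ℂ A) with hb'def
  have ha' : 0 ≤ a' := Unitization.inr_nonneg_iff.mpr ha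
  have hb' : 0 ≤ b' := Unitization.inr_nonneg_iff.mpr hb
  have hna' : ‖a'‖ ≤ 1 := by rwa [ha'def, Unitization.norm_inr]
  have hnb' : ‖b'‖ < 1 := by rwa [hb'def, Unitization.norm_inr]
  have ha1 : a' ≤ 1 := (CStarAlgebra.norm_le_one_iff_of_nonneg a' ha').mp hna'
  have hb1 : b' ≤ 1 := (CStarAlgebra.norm_le_one_iff_of_nonneg b' hb').mp hnb'.le
  -- square roots
  set s : Unitization ℂ A := CFC.sqrt (1 - a') with hsdef
  set v : Unitization ℂ A := CFC.sqrt (1 - b') with hvdef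
  have hs0 : 0 ≤ s := CFC.sqrt_nonneg (a := 1 - a')
  have hv0 : 0 ≤ v := CFC.sqrt_nonneg (a := 1 - b')
  have hs_sa : IsSelfAdjoint s := .of_nonneg hs0
  have hv_sa : IsSelfAdjoint v := .of_nonneg hv0
  have hss : s * s = 1 - a' := CFC.sqrt_mul_sqrt_self _ (sub_nonneg.mpr ha1)
  have hvv : v * v = 1 - b' := CFC.sqrt_mul_sqrt_self _ (sub_nonneg.mpr hb1)
  -- v is a unit
  have hunit : IsUnit (v * v) := by
    rw [hvv]
    simpa using (Units.oneSub b' hnb').isUnit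
  obtain ⟨u, hu⟩ := hunit
  have hcvu : Commute v (u : Unitization ℂ A) := by
    rw [hu]; exact (Commute.refl v).mul_right (Commute.refl v)
  have hcomm : Commute v (↑u⁻¹ : Unitization ℂ A) := hcvu.units_inv_right
  have hiv : (↑u⁻¹ * v) * v = 1 := by rw [mul_assoc, ← hu, Units.inv_mul]
  have hvi : v * (↑u⁻¹ * v) = 1 := by rw [← mul_assoc, hcomm.eq, mul_assoc, ← hu, Units.inv_mul]
  set i : Unitization ℂ A := ↑u⁻¹ * v with hidef
  have hi_sa : IsSelfAdjoint i := by
    have h1 : star i * v = 1 := by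
      have := congrArg star hvi
      rwa [star_mul, hv_sa.star_eq, star_one] at this
    calc star i = star i * (v * i) := by rw [hvi, mul_one]
      _ = (star i * v) * i := by rw [mul_assoc]
      _ = i := by rw [h1, one_mul]
  set m : Unitization ℂ A := s * (i * i) * s with hmdef
  have hm_eq : m = star (i * s) * (i * s) := by
    rw [star_mul, hs_sa.star_eq, hi_sa.star_eq, hmdef]; noncomm_ring
  have hm0 : 0 ≤ m := hm_eq ▸ star_mul_self_nonneg _
  have hm_sa : IsSelfAdjoint m := .of_nonneg hm0
  -- functions
  have hmaxpos : ∀ t : ℝ, 0 < max t 1 := fun t => lt_of_lt_of_le zero_lt_one (le_max_right t 1)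
  set φ2 : ℝ → ℝ := fun t => (max t 1)⁻¹ with hφ2def
  set φ : ℝ → ℝ := fun t => Real.sqrt ((max t 1)⁻¹) with hφdef
  have hφ2c : Continuous φ2 := (continuous_id.max continuous_const).inv₀ fun t => (hmaxpos t).ne'
  have hφc : Continuous φ := Real.continuous_sqrt.comp hφ2c
  have hφ2nonneg : ∀ t : ℝ, 0 ≤ φ2 t := fun t => by
    simp only [hφ2def]; positivity
  set y : Unitization ℂ A := cfc φ m with hydef
  set w : Unitization ℂ A := cfc φ2 m with hwdef
  have hy0 : 0 ≤ y := cfc_nonneg fun t _ => Real.sqrt_nonneg _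
  have hy_sa : IsSelfAdjoint y := .of_nonneg hy0
  have hyy : y * y = w := by
    rw [hydef, hwdef, ← cfc_mul φ φ m hφc.continuousOn hφc.continuousOn]
    exact cfc_congr fun t _ => Real.mul_self_sqrt (hφ2nonneg t)
  have hw0 : 0 ≤ w := cfc_nonneg fun t _ => hφ2nonneg t
  have hw1 : w ≤ 1 := by
    rw [hwdef, ← cfc_one ℝ m hm_sa]
    exact cfc_mono (fun t _ => inv_le_one_of_one_le₀ (le_max_right t 1)) hφ2c.continuousOn continuousOn_const
  set x : Unitization ℂ A := 1 - w with hxdef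
  have hx0 : 0 ≤ x := sub_nonneg.mpr hw1
  have hx1 : x ≤ 1 := by rw [hxdef]; simpa using hw0
  -- y * m * y ≤ 1
  have hymy : y * m * y ≤ 1 := by
    have h1 : cfc (fun t => φ t * t * φ t) m = y * m * y := by
      rw [cfc_mul (fun t => φ t * t) φ m (hφc.continuousOn.mul continuousOn_id) hφc.continuousOn,
        cfc_mul φ (fun t : ℝ => t) m hφc.continuousOn continuousOn_id, cfc_id' ℝ m hm_sa, hydef]
    rw [← h1, ← cfc_one ℝ m hm_sa]
    refine cfc_mono (fun t _ => ?_) ((hφc.continuousOn.mul continuousOn_id).mul hφc.continuousOn) continuousOn_const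
    have h3 : φ t * φ t = (max t 1)⁻¹ := Real.mul_self_sqrt (hφ2nonneg t)
    have h2 : φ t * t * φ t = t / max t 1 := by
      calc φ t * t * φ t = t * (φ t * φ t) := by ring
        _ = t / max t 1 := by rw [h3, div_eq_mul_inv]
    rw [h2]
    exact (div_le_one (hmaxpos t)).mpr (le_max_left t 1)
  -- the key operator inequality
  set T : Unitization ℂ A := i * s * y with hTdef
  have hT_star : star T = y * (s * i) := by
    rw [hTdef, star_mul, star_mul, hi_sa.star_eq, hs_sa.star_eq, hy_sa.star_eq]
  have hsTT : star T * T = y * m * y := by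
    rw [hT_star, hTdef, hmdef]; noncomm_ring
  have hT1 : star T * T ≤ 1 := hsTT ▸ hymy
  have hTT' : T * star T ≤ 1 := by
    have h1 : ‖star T * T‖ ≤ 1 :=
      (CStarAlgebra.norm_le_one_iff_of_nonneg _ (star_mul_self_nonneg T)).mpr hT1
    have h2 : ‖T * star T‖ ≤ 1 := by
      rw [CStarRing.norm_self_mul_star]
      rwa [CStarRing.norm_star_mul_self] at h1
    exact (CStarAlgebra.norm_le_one_iff_of_nonneg _ (mul_star_self_nonneg T)).mp h2
  have hTsT : T * star T = i * (s * w * s) * i := by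
    rw [hT_star, hTdef, ← hyy]; noncomm_ring
  have hsws : s * w * s ≤ 1 - b' := by
    have h3 := star_left_conjugate_le_conjugate hTT' v
    rw [hv_sa.star_eq, hTsT, mul_one, hvv] at h3
    calc s * w * s = (v * i) * (s * w * s) * (i * v) := by rw [hvi, hiv, one_mul, mul_one]
      _ = v * (i * (s * w * s) * i) * v := by noncomm_ring
      _ ≤ 1 - b' := h3
  -- the candidate element
  set c' : Unitization ℂ A := a' + s * x * s with hc'def
  have hsxs0 : 0 ≤ s * x * s := by
    have := star_left_conjugate_nonneg hx0 s
    rwa [hs_sa.star_eq] at this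
  have hac : a' ≤ c' := le_add_of_nonneg_right hsxs0
  have hc0 : 0 ≤ c' := ha'.trans hac
  have hc1 : c' ≤ 1 := by
    have h4 : s * x * s ≤ s * s := by
      have := star_left_conjugate_le_conjugate hx1 s
      rwa [hs_sa.star_eq, mul_one] at this
    calc c' = a' + s * x * s := hc'def
      _ ≤ a' + s * s := add_le_add_right h4 a'
      _ = 1 := by rw [hss]; abel
  have hbc : b' ≤ c' := by
    have h5 : 1 - c' = s * w * s := by
      calc 1 - c' = (1 - a') - s * x * s := by rw [hc'def]; abel
        _ = s * s - s * ((1 : Unitization ℂ A) - w) * s := by rw [hss, hxdef]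
        _ = s * w * s := by noncomm_ring
    have h6 : 1 - c' ≤ 1 - b' := h5 ▸ hsws
    exact (sub_le_sub_iff_left (1 : Unitization ℂ A)).mp h6
  have hnc : ‖c'‖ ≤ 1 := (CStarAlgebra.norm_le_one_iff_of_nonneg c' hc0).mpr hc1
  -- scalar parts
  have hfs : s.fst = 1 := by
    refine aux_fst_one_of_sq s hs0 ?_
    rw [← Unitization.fst_mul, hss]
    have h20 : (1 - (a : Unitization ℂ A)).fst = 1 - (a : Unitization ℂ A).fst :=
      map_sub (Unitization.fstHom ℂ A) _ _
    rw [h20]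
    simp [Unitization.fst_inr]
  have hfv : v.fst = 1 := by
    refine aux_fst_one_of_sq v hv0 ?_
    rw [← Unitization.fst_mul, hvv]
    have h20 : (1 - (b : Unitization ℂ A)).fst = 1 - (b : Unitization ℂ A).fst :=
      map_sub (Unitization.fstHom ℂ A) _ _
    rw [h20]
    simp [Unitization.fst_inr]
  have hfi : i.fst = 1 := by
    have h7 := congrArg (fun x : Unitization ℂ A => x.fst) hiv
    rw [Unitization.fst_mul, hfv, mul_one, Unitization.fst_one] at h7
    exact h7
  have hfm : m.fst = 1 := by
    rw [hmdef]
    simp [Unitization.fst_mul, hfs, hfi]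
  have hfm_sa : IsSelfAdjoint (m.fst) := by rw [hfm]; exact isSelfAdjoint_iff.mpr (star_one ℂ)
  have hfw : w.fst = 1 := by
    have h8 : fstStarHom A (cfc φ2 m) = cfc φ2 (fstStarHom A m) :=
      StarAlgHom.map_cfc (fstStarHom A) φ2 m hφ2c.continuousOn
        (continuous_fstStarHom A) hm_sa hfm_sa
    have h9 : fstStarHom A m = m.fst := rfl
    have h10 : fstStarHom A w = w.fst := rfl
    rw [h9, hfm] at h8
    have h11 : cfc φ2 (algebraMap ℝ ℂ 1) = algebraMap ℝ ℂ (φ2 1) := cfc_algebraMap 1 φ2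
    rw [← h10, hwdef, h8]
    simp only [map_one] at h11
    set_option linter.unnecessarySimpa false in
    simpa [hφ2def] using h11
  have hfx : x.fst = 0 := by
    have h21 : ((1 : Unitization ℂ A) - w).fst = 1 - w.fst := map_sub (Unitization.fstHom ℂ A) _ _
    rw [hxdef, h21, hfw, sub_self]
  have hfc : c'.fst = 0 := by
    rw [hc'def, Unitization.fst_add, Unitization.fst_mul, Unitization.fst_mul, hfx, ha'def,
      Unitization.fst_inr]
    ring
  have hcc : ((c'.snd : A) : Unitization ℂ A) = c' := by
    conv_rhs => rw [← Unitization.inl_fst_add_inr_snd_eq c']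
    rw [hfc]
    simp
  have hc0' : 0 ≤ ((c'.snd : A) : Unitization ℂ A) := by rw [hcc]; exact hc0
  have hsnd0 : 0 ≤ c'.snd := Unitization.inr_nonneg_iff.mp hc0'
  refine ⟨c'.snd, ?_, ?_, ?_⟩
  · rw [← Unitization.inr_le_iff a _ (.of_nonneg ha) (.of_nonneg hsnd0), hcc]
    exact ha'def ▸ hac
  · rw [← Unitization.inr_le_iff b _ (.of_nonneg hb) (.of_nonneg hsnd0), hcc]
    exact hb'def ▸ hbc
  · rw [← Unitization.norm_inr (𝕜 := ℂ) c'.snd, hcc]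
    exact hnc

end Aux

/-- **Proposition 1** (Brown, "Some Directed Subsets of C*-algebras and Semicontinuity
Theory"). Let `A` be a (not necessarily unital) C*-algebra, with the canonical order on
self-adjoint elements. If `a` and `b` are positive elements of `A` with `‖a‖ ≤ 1` and
`‖b‖ < 1`, then there exists `c` in `A` such that `a ≤ c`, `b ≤ c`, and `‖c‖ ≤ 1`. -/
theorem positive_elements_norm_le_one_directed
    {A : Type*} [NonUnitalCStarAlgebra A] [PartialOrder A] [StarOrderedRing A]
    (a b : A) (ha : 0 ≤ a) (hb : 0 ≤ b) (hna : ‖a‖ ≤ 1) (hnb : ‖b‖ < 1) :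
    ∃ c : A, a ≤ c ∧ b ≤ c ∧ ‖c‖ ≤ 1 :=
  main_aux a b ha hb hna hnb
end

section
/- Let A be a unital C*-algebra, and let a, b be positive elements of A with a ≤ 1 and ‖b‖ < 1. Define t to be the positive part of the self-adjoint element (1−b)^{−1/2} (a−b) (1−b)^{−1/2} (where (1−b)^{−1/2} is defined by continuous functional calculus, 1−b being positive and invertible), and set c = b + (1−b)^{1/2} t (1−b)^{1/2}. Then b ≤ c ≤ 1 and a ≤ c. -/
open CFC
open NNReal

/-- The explicit construction in the proof of Proposition 1 of Brown,
"Some Directed Subsets of C*-algebras and Semicontinuity Theory": for positive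
elements `a, b` of a unital C*-algebra with `a ≤ 1` and `‖b‖ < 1`, setting
`t = ((1-b)^(-1/2) * (a-b) * (1-b)^(-1/2))⁺` (positive part via the continuous
functional calculus) and `c = b + (1-b)^(1/2) * t * (1-b)^(1/2)`, one has
`b ≤ c ≤ 1` and `a ≤ c`. -/
theorem explicit_majorant_of_positive_pair
    {A : Type*} [CStarAlgebra A] [PartialOrder A] [StarOrderedRing A]
    (a b : A) (ha : 0 ≤ a) (ha1 : a ≤ 1) (hb : 0 ≤ b) (hnb : ‖b‖ < 1)
    (t c : A)
    (ht : t = (CFC.rpow (1 - b) (-(1/2) : ℝ) * (a - b) * CFC.rpow (1 - b) (-(1/2) : ℝ))⁺)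
    (hc : c = b + CFC.sqrt (1 - b) * t * CFC.sqrt (1 - b)) :
    b ≤ c ∧ c ≤ 1 ∧ a ≤ c := by
  have hb1 : b ≤ 1 := (CStarAlgebra.norm_le_one_iff_of_nonneg b hb).mp hnb.le
  have h1b : (0 : A) ≤ 1 - b := sub_nonneg.mpr hb1
  have hu : IsUnit (1 - b) := isUnit_one_sub_of_norm_lt_one hnb
  have hspec : (0 : ℝ≥0) ∉ spectrum ℝ≥0 (1 - b) := spectrum.zero_notMem ℝ≥0 hu
  set r := CFC.rpow (1 - b) (-(1/2) : ℝ) with hr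
  set q := CFC.sqrt (1 - b) with hq
  have hrpos : (0 : A) ≤ r := CFC.rpow_nonneg
  have hqpos : (0 : A) ≤ q := sqrt_nonneg _
  have hqr : q * r = 1 := by
    rw [hq, hr, CFC.sqrt_eq_rpow]
    simpa using CFC.rpow_mul_rpow_neg (1/2 : ℝ) (IsStrictlyPositive.iff_of_unital.mpr ⟨h1b, hu⟩)
  have hrq : r * q = 1 := by
    rw [hq, hr, CFC.sqrt_eq_rpow]
    simpa using CFC.rpow_neg_mul_rpow (1/2 : ℝ) (IsStrictlyPositive.iff_of_unital.mpr ⟨h1b, hu⟩)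
  have hqq : q * q = 1 - b := CFC.sqrt_mul_sqrt_self _ h1b
  set s := r * (a - b) * r with hs
  have hrsa : IsSelfAdjoint r := .of_nonneg hrpos
  have hqsa : IsSelfAdjoint q := .of_nonneg hqpos
  have habsa : IsSelfAdjoint (a - b) := (IsSelfAdjoint.of_nonneg ha).sub (.of_nonneg hb)
  have hssa : IsSelfAdjoint s := habsa.conjugate_self hrsa
  -- q * s * q = a - b
  have hqsq : q * s * q = a - b := by
    have h1 : q * s * q = (q * r) * (a - b) * (r * q) := by rw [hs]; noncomm_ring
    rw [h1, hqr, hrq, one_mul, mul_one]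
  clear_value r q s
  -- s ≤ 1
  have hsle1 : s ≤ 1 := by
    have h1 : a - b ≤ 1 - b := by gcongr
    calc s = r * (a - b) * r := hs
    _ ≤ r * (1 - b) * r := hrsa.conjugate_le_conjugate h1
    _ = (r * q) * (q * r) := by rw [← hqq]; noncomm_ring
    _ = 1 := by rw [hrq, hqr, one_mul]
  -- t ≤ 1
  have htpos : 0 ≤ t := ht ▸ CFC.posPart_nonneg s
  have htle1 : t ≤ 1 := by
    rw [ht, CFC.posPart_def, cfcₙ_eq_cfc]
    rw [cfc_le_one_iff _ s (by fun_prop)]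
    intro x hx
    have := (CFC.le_one_iff (R := ℝ) s).mp hsle1 x hx
    exact sup_le this zero_le_one
  -- t - s = s⁻
  have hts : t - s = s⁻ := by
    rw [ht]
    nth_rewrite 2 [← CFC.posPart_sub_negPart s hssa]
    abel
  constructor
  · rw [hc]
    exact le_add_of_nonneg_right (conjugate_nonneg_of_nonneg htpos hqpos)
  constructor
  · rw [hc, ← sub_nonneg]
    have h2 : q * (1 - t) * q = q * q - q * t * q := by noncomm_ring
    have h3 : (1 : A) - (b + q * t * q) = q * (1 - t) * q := by
      rw [h2, hqq]; abel
    rw [h3]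
    exact conjugate_nonneg_of_nonneg (sub_nonneg.mpr htle1) hqpos
  · rw [hc, ← sub_nonneg]
    have h2 : q * (t - s) * q = q * t * q - q * s * q := by noncomm_ring
    have h3 : b + q * t * q - a = q * (t - s) * q := by
      rw [h2, hqsq]; abel
    rw [h3, hts]
    exact conjugate_nonneg_of_nonneg (CFC.negPart_nonneg s) hqpos
end

section
/- Let A be a C*-algebra (not necessarily unital) and let Ã = A + ℂ·1 be its unitization, with identity 1. If a and b are self-adjoint elements of A such that a ≤ 1 and b ≤ (1−δ)·1 in Ã for some δ > 0, then there exists a self-adjoint element c of A such that a ≤ c, b ≤ c, and c ≤ 1 in Ã. -/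
open Unitization in
/-- The first-coordinate projection of the unitization, as a ⋆-algebra homomorphism. -/
noncomputable def unitizationFstStarAlgHom (A : Type*) [NonUnitalCStarAlgebra A] :
    Unitization ℂ A →⋆ₐ[ℂ] ℂ :=
  { Unitization.fstHom ℂ A with map_star' := fun x => Unitization.fst_star x }

/-- Let `A` be a (not necessarily unital) C*-algebra with unitization `Unitization ℂ A = A + ℂ·1`
(`Unitization ℂ A`, equipped with its canonical order). If `a` and `b` are self-adjoint
elements of `A` with `a ≤ 1` and `b ≤ (1-δ)·1` in `Unitization ℂ A` for some `δ > 0`, then there is a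
self-adjoint `c` in `A` with `a ≤ c`, `b ≤ c`, and `c ≤ 1` in `Unitization ℂ A`. -/
theorem exists_selfAdjoint_majorant_le_one_unitization
    {A : Type*} [NonUnitalCStarAlgebra A] [PartialOrder A] [StarOrderedRing A]
    (a b : A) (ha : IsSelfAdjoint a) (hb : IsSelfAdjoint b)
    (ha1 : (a : Unitization ℂ A) ≤ 1)
    (δ : ℝ) (hδ : 0 < δ) (hbδ : (b : Unitization ℂ A) ≤ (1 - δ) • (1 : Unitization ℂ A)) :
    ∃ c : A, IsSelfAdjoint c ∧ a ≤ c ∧ b ≤ c ∧ (c : Unitization ℂ A) ≤ 1 := by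
  
  set u : Unitization ℂ A := 1 - (a : Unitization ℂ A) with hu_def
  set v : Unitization ℂ A := 1 - (b : Unitization ℂ A) with hv_def
  have hu0 : (0 : Unitization ℂ A) ≤ u := sub_nonneg.mpr ha1
  have hδv : δ • (1 : Unitization ℂ A) ≤ v := by
    have h := sub_le_sub_left hbδ 1
    have : (1 : Unitization ℂ A) - (1 - δ) • 1 = δ • 1 := by
      rw [sub_smul, one_smul]; abel
    rwa [this] at h
  have hδ0 : (0 : Unitization ℂ A) ≤ δ • 1 := smul_nonneg hδ.le zero_le_one
  have hv0 : (0 : Unitization ℂ A) ≤ v := hδ0.trans hδv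
  have hδU : IsUnit (δ • (1 : Unitization ℂ A)) := by
    rw [Algebra.smul_def, mul_one]
    exact (isUnit_iff_ne_zero.mpr hδ.ne').map (algebraMap ℝ (Unitization ℂ A))
  have hvU : IsUnit v := CStarAlgebra.isUnit_of_le _ hδv (hδU.isStrictlyPositive hδ0)
  have hv_sa : IsSelfAdjoint v := .of_nonneg hv0
  -- the square root of `v`
  set q : Unitization ℂ A := cfc Real.sqrt v with hq_def
  have hq0 : (0 : Unitization ℂ A) ≤ q := cfc_nonneg fun x _ => Real.sqrt_nonneg x
  have hq_sa : IsSelfAdjoint q := .of_nonneg hq0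
  have hqq : q * q = v := by
    rw [hq_def, ← cfc_mul Real.sqrt Real.sqrt v]
    have : ∀ x ∈ spectrum ℝ v, Real.sqrt x * Real.sqrt x = id x := fun x hx =>
      Real.mul_self_sqrt (spectrum_nonneg_of_nonneg hv0 hx)
    rw [cfc_congr this, cfc_id ℝ v]
  have hcomm : Commute q (↑hvU.unit⁻¹ : Unitization ℂ A) := by
    refine Commute.units_inv_right ?_
    have : (hvU.unit : Unitization ℂ A) = v := hvU.unit_spec
    rw [Commute, SemiconjBy, this, ← hqq, mul_assoc]
  have hqU : IsUnit q := by
    refine ⟨⟨q, q * ↑hvU.unit⁻¹, ?_, ?_⟩, rfl⟩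
    · rw [← mul_assoc, hqq]
      exact hvU.mul_val_inv
    · rw [mul_assoc, ← hcomm.eq, ← mul_assoc, hqq]
      exact hvU.mul_val_inv
  set r : Unitization ℂ A := ↑hqU.unit⁻¹ with hr_def
  have hqr : q * r = 1 := hqU.mul_val_inv
  have hrq : r * q = 1 := hqU.val_inv_mul
  have hr_sa : IsSelfAdjoint r := by
    have h1 : star r * q = 1 := by
      have := congrArg star hqr
      rwa [star_mul, hq_sa.star_eq, star_one] at this
    have : star r = star r * (q * r) := by rw [hqr, mul_one]
    rw [isSelfAdjoint_iff, this, ← mul_assoc, h1, one_mul]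
  set t : Unitization ℂ A := r * u * r with ht_def
  have ht0 : (0 : Unitization ℂ A) ≤ t := by
    have := star_left_conjugate_nonneg hu0 r
    rwa [hr_sa.star_eq] at this
  have ht_sa : IsSelfAdjoint t := .of_nonneg ht0
  set s : Unitization ℂ A := cfc (fun x : ℝ => min x 1) t with hs_def
  have hmincont : ContinuousOn (fun x : ℝ => min x 1) (spectrum ℝ t) :=
    (continuous_id.min continuous_const).continuousOn
  have hs0 : (0 : Unitization ℂ A) ≤ s :=
    cfc_nonneg fun x hx => le_min (spectrum_nonneg_of_nonneg ht0 hx) zero_le_one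
  have hs_sa : IsSelfAdjoint s := .of_nonneg hs0
  have hs1 : s ≤ 1 := cfc_le_one _ _ fun x _ => min_le_right x 1
  have hst : s ≤ t := by
    have h := cfc_mono (f := fun x : ℝ => min x 1) (g := id) (a := t)
      (fun x _ => min_le_left x 1)
    rwa [cfc_id ℝ t] at h
  set w : Unitization ℂ A := q * s * q with hw_def
  have hw0 : (0 : Unitization ℂ A) ≤ w := by
    have := star_left_conjugate_nonneg hs0 q
    rwa [hq_sa.star_eq] at this
  have hw_sa : IsSelfAdjoint w := .of_nonneg hw0
  have hwu : w ≤ u := by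
    have h := star_left_conjugate_le_conjugate hst q
    rw [hq_sa.star_eq] at h
    have key : q * t * q = u := by
      have : q * (r * u * r) * q = (q * r) * u * (r * q) := by noncomm_ring
      rw [ht_def, this, hqr, hrq, one_mul, mul_one]
    rwa [key] at h
  have hwv : w ≤ v := by
    have h := star_left_conjugate_le_conjugate hs1 q
    rw [hq_sa.star_eq, mul_one, hqq] at h
    exact h
  -- scalar parts
  set φ := unitizationFstStarAlgHom A with hφ_def
  have hφ_apply : ∀ x : Unitization ℂ A, φ x = x.fst := fun _ => rfl
  have hφcont : Continuous φ :=
    continuous_fst.comp Unitization.uniformEquivProd.continuous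
  have hφu : φ u = 1 := by
    rw [hu_def, map_sub, map_one, hφ_apply]
    simp [Unitization.fst_inr]
  have hφv : φ v = 1 := by
    rw [hv_def, map_sub, map_one, hφ_apply]
    simp [Unitization.fst_inr]
  have hφq : φ q = 1 := by
    have h := StarAlgHomClass.map_cfc φ Real.sqrt v Real.continuous_sqrt.continuousOn hφcont hv_sa
      (by rw [hφv]; exact IsSelfAdjoint.one ℂ)
    rw [hφv] at h
    have h1 : (1 : ℂ) = algebraMap ℝ ℂ 1 := by simp
    rw [hq_def, h, h1, cfc_algebraMap (A := ℂ) 1 Real.sqrt, Real.sqrt_one, map_one]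
  have hφr : φ r = 1 := by
    have := congrArg φ hqr
    rwa [map_mul, hφq, one_mul, map_one] at this
  have hφt : φ t = 1 := by
    rw [ht_def, map_mul, map_mul, hφu, hφr, one_mul, mul_one]
  have hφs : φ s = 1 := by
    have h := StarAlgHomClass.map_cfc φ (fun x : ℝ => min x 1) t hmincont hφcont ht_sa
      (by rw [hφt]; exact IsSelfAdjoint.one ℂ)
    rw [hφt] at h
    have h1 : (1 : ℂ) = algebraMap ℝ ℂ 1 := by simp
    rw [hs_def, h, h1, cfc_algebraMap (A := ℂ) 1 (fun x : ℝ => min x 1)]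
    simp
  have hφw : φ w = 1 := by
    rw [hw_def, map_mul, map_mul, hφq, hφs, one_mul, mul_one]
  -- the majorant
  have hfst : (1 - w).fst = 0 := by
    have : φ (1 - w) = 0 := by rw [map_sub, map_one, hφw, sub_self]
    rwa [hφ_apply] at this
  set c : A := (1 - w).snd with hc_def
  have hcw : (c : Unitization ℂ A) = 1 - w := by
    conv_rhs => rw [← Unitization.inl_fst_add_inr_snd_eq (1 - w)]
    rw [hfst, Unitization.inl_zero, zero_add]
  have hc_sa : IsSelfAdjoint c := by
    have h : ((star c : A) : Unitization ℂ A) = (c : Unitization ℂ A) := by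
      rw [Unitization.inr_star, hcw]
      exact ((IsSelfAdjoint.one (Unitization ℂ A)).sub hw_sa).star_eq
    exact Unitization.inr_injective h
  refine ⟨c, hc_sa, ?_, ?_, ?_⟩
  · rw [← Unitization.inr_le_iff a c ha hc_sa, hcw]
    rw [le_sub_comm]
    exact hwu
  · rw [← Unitization.inr_le_iff b c hb hc_sa, hcw]
    rw [le_sub_comm]
    exact hwv
  · rw [hcw]
    exact sub_le_self 1 hw0
end

section
/- Let θ ∈ (0, 1) and let P₊ = [[1/2, 1/2], [1/2, 1/2]] and P₋ = [[1/2, −1/2], [−1/2, 1/2]] be 2×2 complex matrices. If M is a Hermitian 2×2 complex matrix such that M − θ·P₊ and M − θ·P₋ are positive semidefinite and I − M is positive semidefinite (I the 2×2 identity matrix), then the (1,1) diagonal entry of M satisfies Re M₁₁ ≥ θ/2 + θ²/(4 − 2θ). -/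
open Matrix
open scoped ComplexOrder

lemma psd_det_nonneg {A : Matrix (Fin 2) (Fin 2) ℂ} (hA : A.PosSemidef) : 0 ≤ A.det.re := by
  have h : (0:ℂ) ≤ A.det := by
    rw [hA.isHermitian.det_eq_prod_eigenvalues, Fin.prod_univ_two, ← RCLike.ofReal_mul]
    exact RCLike.ofReal_nonneg.mpr (mul_nonneg (hA.eigenvalues_nonneg 0) (hA.eigenvalues_nonneg 1))
  exact (Complex.le_def.mp h).1

/-- The matrix inequality from Example (i) of Brown, "Some Directed Subsets of C*-algebras
and Semicontinuity Theory": if `θ ∈ (0,1)` and `M` is a Hermitian 2×2 complex matrix with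
`θ·P₊ ≤ M`, `θ·P₋ ≤ M`, and `M ≤ I`, where `P₊ = [[1/2, 1/2], [1/2, 1/2]]` and
`P₋ = [[1/2, -1/2], [-1/2, 1/2]]`, then `Re M₁₁ ≥ θ/2 + θ²/(4 - 2θ)`. -/
theorem entry_lower_bound_of_dominates_projections
    (θ : ℝ) (hθ : θ ∈ Set.Ioo (0 : ℝ) 1)
    (M : Matrix (Fin 2) (Fin 2) ℂ) (hM : M.IsHermitian)
    (hplus : (M - (θ : ℂ) • !![1/2, 1/2; 1/2, 1/2]).PosSemidef)
    (hminus : (M - (θ : ℂ) • !![1/2, -(1/2); -(1/2), 1/2]).PosSemidef)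
    (hM1 : ((1 : Matrix (Fin 2) (Fin 2) ℂ) - M).PosSemidef) :
    θ / 2 + θ ^ 2 / (4 - 2 * θ) ≤ (M 0 0).re := by
  obtain ⟨hθ0, hθ1⟩ := hθ
  have hb : M 1 0 = (starRingEnd ℂ) (M 0 1) := (hM.apply 1 0).symm
  have ha0 : (M 0 0).im = 0 := by
    have := congrArg Complex.im (hM.apply 0 0); simp at this; linarith
  have ha1 : (M 1 1).im = 0 := by
    have := congrArg Complex.im (hM.apply 1 1); simp at this; linarith
  have d1 := psd_det_nonneg hplus
  have d2 := psd_det_nonneg hminus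
  rw [Matrix.det_fin_two] at d1 d2
  simp [Matrix.sub_apply, Matrix.smul_apply, hb, Complex.sub_re, Complex.mul_re,
    Complex.sub_im, Complex.mul_im, ha0, ha1] at d1 d2
  have e1 := hplus.re_dotProduct_nonneg ![1, 0]
  have e2 := hM1.re_dotProduct_nonneg ![0, 1]
  simp [dotProduct, Matrix.mulVec, Matrix.sub_apply, Matrix.smul_apply, Fin.sum_univ_two] at e1 e2
  have h4 : (0:ℝ) < 4 - 2*θ := by linarith
  have key : θ^2 / (4 - 2*θ) ≤ (M 0 0).re - θ/2 := by
    rw [div_le_iff₀ h4]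
    nlinarith [mul_nonneg (show (0:ℝ) ≤ (M 0 0).re - θ/2 by linarith)
        (show (0:ℝ) ≤ 2 - 2*(M 1 1).re by linarith),
      sq_nonneg (M 0 1).re, sq_nonneg (M 0 1).im]
  linarith
end

section
/- For n ≥ 1 let hₙ = [[1, 0], [0, 1/n]] and, for a parameter θ ∈ (0,1), let (a₊)ₙ = [[θ/2, n^{−1/2}·θ/2], [n^{−1/2}·θ/2, n^{−1}·θ/2]] and (a₋)ₙ = [[θ/2, −n^{−1/2}·θ/2], [−n^{−1/2}·θ/2, n^{−1}·θ/2]], all 2×2 complex matrices. Then there exists θ ∈ (0,1) such that there is no sequence (bₙ)_{n≥1} of Hermitian 2×2 complex matrices which converges (entrywise) to a limit b_∞ with [[1/2, 0], [0, 0]] − b_∞ positive semidefinite and which satisfies, for every n ≥ 1, that bₙ − (a₊)ₙ, bₙ − (a₋)ₙ, and hₙ − bₙ are all positive semidefinite. -/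
open Matrix Filter
open scoped ComplexOrder

/-- The element `h` of Example (i): `hₙ = [[1, 0], [0, 1/n]]`. -/
noncomputable def exampleH (n : ℕ) : Matrix (Fin 2) (Fin 2) ℂ :=
  !![1, 0; 0, (((n : ℝ)⁻¹ : ℝ) : ℂ)]

/-- The element `a₊` of Example (i):
`(a₊)ₙ = [[θ/2, n^(-1/2)·θ/2], [n^(-1/2)·θ/2, n⁻¹·θ/2]]`. -/
noncomputable def exampleAPlus (θ : ℝ) (n : ℕ) : Matrix (Fin 2) (Fin 2) ℂ :=
  !![((θ / 2 : ℝ) : ℂ), (((Real.sqrt n)⁻¹ * θ / 2 : ℝ) : ℂ);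
     (((Real.sqrt n)⁻¹ * θ / 2 : ℝ) : ℂ), (((n : ℝ)⁻¹ * θ / 2 : ℝ) : ℂ)]

/-- The element `a₋` of Example (i):
`(a₋)ₙ = [[θ/2, -n^(-1/2)·θ/2], [-n^(-1/2)·θ/2, n⁻¹·θ/2]]`. -/
noncomputable def exampleAMinus (θ : ℝ) (n : ℕ) : Matrix (Fin 2) (Fin 2) ℂ :=
  !![((θ / 2 : ℝ) : ℂ), ((-((Real.sqrt n)⁻¹ * θ / 2) : ℝ) : ℂ);
     ((-((Real.sqrt n)⁻¹ * θ / 2) : ℝ) : ℂ), (((n : ℝ)⁻¹ * θ / 2 : ℝ) : ℂ)]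

/-- Key quantitative step: for `θ = 3/4`, the constraints at stage `n ≥ 1` force the
`(0,0)` entry of `bₙ` to have real part at least `3/5`. -/
theorem example_key_bound (n : ℕ) (hn : 1 ≤ n) (M : Matrix (Fin 2) (Fin 2) ℂ)
    (hherm : M.IsHermitian)
    (hp : (M - exampleAPlus (3/4) n).PosSemidef)
    (hm : (M - exampleAMinus (3/4) n).PosSemidef)
    (hh : (exampleH n - M).PosSemidef) : (3/5 : ℝ) ≤ (M 0 0).re := by
  have hM : M 1 0 = star (M 0 1) := by
    have := hherm.apply 1 0; simpa using this.symm
  have hR : (M 1 1).im = 0 := by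
    have h2 : (M 1 1).im = -(M 1 1).im := by
      simpa [Complex.ext_iff] using congrArg Complex.im (hherm.apply 1 1).symm
    linarith
  have hn0 : (0:ℝ) < n := by exact_mod_cast hn
  obtain ⟨s, hs⟩ : ∃ s, Real.sqrt n = s := ⟨_, rfl⟩
  have hs0 : 0 < s := hs ▸ Real.sqrt_pos.2 hn0
  have hss : s * s = n := hs ▸ Real.mul_self_sqrt hn0.le
  obtain ⟨c, hc⟩ : ∃ c : ℝ, (3*s/5 : ℝ) = c := ⟨_, rfl⟩
  have e1 := (Complex.le_def.mp (hp.dotProduct_mulVec_nonneg ![1, ((c : ℝ) : ℂ)])).1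
  have e2 := (Complex.le_def.mp (hm.dotProduct_mulVec_nonneg ![1, ((-c : ℝ) : ℂ)])).1
  have e3 := (Complex.le_def.mp (hh.dotProduct_mulVec_nonneg ![0, 1])).1
  simp [Matrix.mulVec, dotProduct, Fin.sum_univ_two, exampleAPlus, exampleAMinus, exampleH,
    Matrix.sub_apply, hM, hs, Complex.add_re, Complex.sub_re, Complex.mul_re,
    Complex.ofReal_re, Complex.ofReal_im, Complex.conj_re, Complex.conj_im, hR] at e1 e2 e3
  have hsi : s⁻¹ * c = 3/5 := by
    rw [← hc]; field_simp
  have hcc : c * c = 9 * (n:ℝ) / 25 := by rw [← hc, ← hss]; ring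
  have hni : (n:ℝ)⁻¹ * (c * c) = 9/25 := by
    rw [hcc]; field_simp
  nlinarith [e1, e2, e3, hsi, hcc, hni, mul_le_mul_of_nonneg_right e3 (mul_self_nonneg c)]

/-- The key non-existence claim of Example (i) of Brown, "Some Directed Subsets of
C*-algebras and Semicontinuity Theory": for a suitable `θ ∈ (0,1)` there is no sequence
`(bₙ)` of Hermitian 2×2 matrices converging (entrywise) to a limit `b∞` with
`b∞ ≤ [[1/2, 0], [0, 0]]` and satisfying `(a₊)ₙ ≤ bₙ`, `(a₋)ₙ ≤ bₙ`, `bₙ ≤ hₙ`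
for all `n ≥ 1`. -/
theorem no_majorant_sequence_for_example :
    ∃ θ ∈ Set.Ioo (0 : ℝ) 1,
      ¬ ∃ (b : ℕ → Matrix (Fin 2) (Fin 2) ℂ) (binf : Matrix (Fin 2) (Fin 2) ℂ),
        (∀ n, 1 ≤ n → (b n).IsHermitian) ∧
        (∀ i j, Tendsto (fun n => b n i j) atTop (nhds (binf i j))) ∧
        (!![(1/2 : ℂ), 0; 0, 0] - binf).PosSemidef ∧
        (∀ n, 1 ≤ n → (b n - exampleAPlus θ n).PosSemidef ∧
          (b n - exampleAMinus θ n).PosSemidef ∧ (exampleH n - b n).PosSemidef) := by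
  refine ⟨3/4, ⟨by norm_num, by norm_num⟩, ?_⟩
  rintro ⟨b, binf, hherm, htend, hbinf, hineq⟩
  have key : ∀ n, 1 ≤ n → (3/5 : ℝ) ≤ (b n 0 0).re := fun n hn =>
    example_key_bound n hn (b n) (hherm n hn) (hineq n hn).1 (hineq n hn).2.1 (hineq n hn).2.2
  have hlim : (3/5 : ℝ) ≤ (binf 0 0).re := by
    refine ge_of_tendsto ((Complex.continuous_re.tendsto _).comp (htend 0 0)) ?_
    exact eventually_atTop.2 ⟨1, key⟩
  have hub : (binf 0 0).re ≤ 1/2 := by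
    have e := (Complex.le_def.mp (hbinf.dotProduct_mulVec_nonneg ![1, 0])).1
    simpa [Matrix.mulVec, dotProduct, Fin.sum_univ_two, Matrix.sub_apply,
      Complex.sub_re] using e
  linarith
end
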